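/- Let n ≥ 2 and let Φ denote the cumulative distribution function of the standard Gaussian distribution N(0,1). Let μ be a probability mass function on {0,1}^n × {0,1}^n with μ(x,y) > 0 for every (x,y). Then the function L(A,c) := Σ_{(x,y) ∈ {0,1}^n × {0,1}^n} μ(x,y) · Σ_{i=1}^n [ x_i · log(1 − Φ(c_i − (Ay)_i)) + (1 − x_i) · log Φ(c_i − (Ay)_i) ] is strictly concave as a function of (A,c) on ℝ^{n×n} × ℝ^n. -/

import Mathlib

/-!
The probit log-likelihood `p ↦ log Φ(p)` is strictly concave: with `φ = Φ'` and `φ' = -pφ`,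
`(log Φ)'' = -φ (pΦ + φ) / Φ²`, and `pΦ(p) + φ(p) = ∫_{t ≤ p} (p - t) φ(t) dt > 0`.
By the symmetry `1 - Φ(p) = Φ(-p)` the same holds for `log (1 - Φ(p))`.
The objective is a positively weighted sum of these functions composed with the linear forms
`(A, c) ↦ c_i - (A y)_i`, and these forms separate points as `y` ranges over `0` and the unit
vectors, so at least one summand is strictly concave along any nondegenerate segment.
-/

open Matrix

/-- The real value of a binary observation coordinate. -/
def bval (b : Bool) : ℝ := if b then 1 else 0

/-- CDF of the standard Gaussian distribution `N(0,1)`. -/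
noncomputable def gaussCDF (x : ℝ) : ℝ :=
  ((ProbabilityTheory.gaussianReal 0 1) (Set.Iic x)).toReal

open MeasureTheory ProbabilityTheory Real Set Filter Topology

section StrictConcaveSum

variable {ι E : Type*} [Fintype ι] [AddCommMonoid E] [Module ℝ E]

theorem strictConcaveOn_univ_sum_mul_comp_linearMap {g : ι → ℝ → ℝ}
    (hg : ∀ k, StrictConcaveOn ℝ univ (g k)) {w : ι → ℝ} (hw : ∀ k, 0 < w k)
    (ℓ : ι → E →ₗ[ℝ] ℝ) (hℓ : Function.Injective fun x k => ℓ k x) :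
    StrictConcaveOn ℝ univ fun x => ∑ k, w k * g k (ℓ k x) := by
  refine ⟨convex_univ, fun x _ y _ hxy a b ha hb hab => ?_⟩
  obtain ⟨k, hk⟩ := Function.ne_iff.mp (hℓ.ne hxy)
  simp only [smul_eq_mul, map_add, map_smul, Finset.mul_sum, ← Finset.sum_add_distrib]
  have hfactor : ∀ j, a * (w j * g j (ℓ j x)) + b * (w j * g j (ℓ j y))
      = w j * (a • g j (ℓ j x) + b • g j (ℓ j y)) := fun j => by
    simp only [smul_eq_mul]; ring
  refine Finset.sum_lt_sum (fun j _ => ?_) ⟨k, Finset.mem_univ _, ?_⟩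
  · exact (hfactor j).trans_le <| mul_le_mul_of_nonneg_left
      ((hg j).concaveOn.2 (mem_univ _) (mem_univ _) ha.le hb.le hab) (hw j).le
  · exact (hfactor k).trans_lt <| mul_lt_mul_of_pos_left
      ((hg k).2 (mem_univ _) (mem_univ _) hk ha hb hab) (hw k)

end StrictConcaveSum

section LinearPredictor

variable {m n : Type*} [Fintype n]

def linearPredictor (v : n → ℝ) (i : m) : Matrix m n ℝ × (m → ℝ) →ₗ[ℝ] ℝ where
  toFun θ := θ.2 i - (θ.1 *ᵥ v) i
  map_add' θ θ' := by simp only [Prod.fst_add, Prod.snd_add, add_mulVec, Pi.add_apply]; ring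
  map_smul' c θ := by
    simp only [Prod.smul_fst, Prod.smul_snd, smul_mulVec, Pi.smul_apply, smul_eq_mul,
      RingHom.id_apply]
    ring

@[simp]
lemma linearPredictor_apply (v : n → ℝ) (i : m) (θ : Matrix m n ℝ × (m → ℝ)) :
    linearPredictor v i θ = θ.2 i - (θ.1 *ᵥ v) i := rfl

lemma linearPredictor_injective [DecidableEq n] :
    Function.Injective fun θ (k : (n → Bool) × m) =>
      linearPredictor (fun j => bval (k.1 j)) k.2 θ := by
  intro θ θ' h
  have hk : ∀ (y : n → Bool) (i : m), θ.2 i - (θ.1 *ᵥ fun j => bval (y j)) i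
      = θ'.2 i - (θ'.1 *ᵥ fun j => bval (y j)) i := fun y i => congrFun h (y, i)
  have hc : θ.2 = θ'.2 := funext fun i => by
    simpa [bval, ← Pi.zero_def] using hk (fun _ => false) i
  have hA : θ.1 = θ'.1 := by
    ext i j
    have hy : (fun j' => bval (j' == j)) = Pi.single j 1 := by
      funext j'
      simp [bval, Pi.single_apply]
    simpa [hy, mulVec_single, hc] using hk (· == j) i
  exact Prod.ext hA hc

end LinearPredictor

lemma setIntegral_Iic_pos {f : ℝ → ℝ} {x : ℝ} (hf : IntegrableOn f (Iic x))
    (hnonneg : ∀ t ≤ x, 0 ≤ f t) (hpos : ∀ t < x, 0 < f t) : 0 < ∫ t in Iic x, f t := by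
  rw [setIntegral_pos_iff_support_of_nonneg_ae
    ((ae_restrict_iff' measurableSet_Iic).2 (ae_of_all _ hnonneg)) hf]
  exact lt_of_lt_of_le (by simp)
    (measure_mono (s := Iio x) fun t ht => ⟨(hpos t ht).ne', mem_Iic.2 (le_of_lt ht)⟩)

section Gaussian

noncomputable def gaussPDF (x : ℝ) : ℝ := gaussianPDFReal 0 1 x

lemma gaussPDF_eq (x : ℝ) : gaussPDF x = (√(2 * π))⁻¹ * rexp (-x ^ 2 / 2) := by
  simp [gaussPDF, gaussianPDFReal]

lemma gaussPDF_pos (x : ℝ) : 0 < gaussPDF x := gaussianPDFReal_pos 0 1 x one_ne_zero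

lemma gaussPDF_neg (x : ℝ) : gaussPDF (-x) = gaussPDF x := by
  simp only [gaussPDF_eq, neg_sq]

lemma continuous_gaussPDF : Continuous gaussPDF := by
  simp only [funext gaussPDF_eq]
  fun_prop

lemma integrable_gaussPDF : Integrable gaussPDF := integrable_gaussianPDFReal 0 1

lemma integrable_mul_gaussPDF : Integrable fun t => t * gaussPDF t := by
  refine ((integrable_mul_exp_neg_mul_sq (b := 1 / 2) (by norm_num)).const_mul
    (√(2 * π))⁻¹).congr (ae_of_all _ fun t => ?_)
  simp only [gaussPDF_eq]
  ring_nf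

lemma hasDerivAt_gaussPDF (x : ℝ) : HasDerivAt gaussPDF (-x * gaussPDF x) x := by
  have h : HasDerivAt (fun t : ℝ => -t ^ 2 / 2) (-(2 * x) / 2) x := by
    simpa using (hasDerivAt_pow 2 x).neg.div_const 2
  refine ((h.exp.const_mul (√(2 * π))⁻¹).congr_deriv ?_).congr_of_eventuallyEq
    (Eventually.of_forall gaussPDF_eq)
  rw [gaussPDF_eq]
  ring

lemma tendsto_gaussPDF_atBot : Tendsto gaussPDF atBot (𝓝 0) := by
  have hsq : Tendsto (fun t : ℝ => -t ^ 2 / 2) atBot atBot := by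
    have := ((tendsto_pow_atTop (α := ℝ) two_ne_zero).comp
      tendsto_neg_atBot_atTop).atTop_div_const (two_pos : (0 : ℝ) < 2)
    simpa [Function.comp_def, neg_div] using tendsto_neg_atTop_atBot.comp this
  have := (tendsto_exp_atBot.comp hsq).const_mul (√(2 * π))⁻¹
  simpa [funext gaussPDF_eq] using this

lemma integral_Iic_mul_gaussPDF (x : ℝ) : ∫ t in Iic x, t * gaussPDF t = -gaussPDF x := by
  have h := integral_Iic_of_hasDerivAt_of_tendsto' (a := x) (f := fun t => -gaussPDF t)
    (fun t _ => (hasDerivAt_gaussPDF t).neg.congr_deriv (by ring))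
    integrable_mul_gaussPDF.integrableOn (by simpa using tendsto_gaussPDF_atBot.neg)
  simpa using h

lemma gaussCDF_eq_integral (x : ℝ) : gaussCDF x = ∫ t in Iic x, gaussPDF t := by
  rw [gaussCDF, gaussianReal_apply_eq_integral 0 one_ne_zero,
    ENNReal.toReal_ofReal (integral_nonneg fun t => gaussianPDFReal_nonneg 0 1 t)]
  rfl

lemma gaussCDF_pos (x : ℝ) : 0 < gaussCDF x := by
  rw [gaussCDF_eq_integral]
  exact setIntegral_Iic_pos integrable_gaussPDF.integrableOn
    (fun t _ => (gaussPDF_pos t).le) (fun t _ => gaussPDF_pos t)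

lemma one_sub_gaussCDF (x : ℝ) : 1 - gaussCDF x = gaussCDF (-x) := by
  have htotal := intervalIntegral.integral_Iic_add_Ioi (b := x)
    integrable_gaussPDF.integrableOn integrable_gaussPDF.integrableOn
  have hone : ∫ t, gaussPDF t = 1 := integral_gaussianPDFReal_eq_one 0 one_ne_zero
  rw [gaussCDF_eq_integral, gaussCDF_eq_integral, ← integral_comp_neg_Ioi]
  simp only [gaussPDF_neg]
  linarith

lemma hasDerivAt_gaussCDF (x : ℝ) : HasDerivAt gaussCDF (gaussPDF x) x := by
  have h : ∀ y, gaussCDF y = gaussCDF 0 + ∫ t in (0 : ℝ)..y, gaussPDF t := fun y => by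
    rw [← intervalIntegral.integral_Iic_sub_Iic integrable_gaussPDF.integrableOn
      integrable_gaussPDF.integrableOn, gaussCDF_eq_integral, gaussCDF_eq_integral]
    ring
  rw [funext h]
  exact (intervalIntegral.integral_hasDerivAt_right integrable_gaussPDF.intervalIntegrable
    (continuous_gaussPDF.stronglyMeasurableAtFilter _ _)
    continuous_gaussPDF.continuousAt).const_add _

lemma mul_gaussCDF_add_gaussPDF_pos (x : ℝ) : 0 < x * gaussCDF x + gaussPDF x := by
  have hint : IntegrableOn (fun t => (x - t) * gaussPDF t) (Iic x) :=
    ((integrable_gaussPDF.const_mul x).sub integrable_mul_gaussPDF).integrableOn.congr_fun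
      (fun t _ => by simp only [Pi.sub_apply]; ring) measurableSet_Iic
  have heq : x * gaussCDF x + gaussPDF x = ∫ t in Iic x, (x - t) * gaussPDF t := by
    simp only [sub_mul]
    rw [integral_sub (integrable_gaussPDF.const_mul x).integrableOn
      integrable_mul_gaussPDF.integrableOn, integral_const_mul, integral_Iic_mul_gaussPDF,
      gaussCDF_eq_integral]
    ring
  rw [heq]
  exact setIntegral_Iic_pos hint (fun t ht => mul_nonneg (sub_nonneg.2 ht) (gaussPDF_pos t).le)
    (fun t ht => mul_pos (sub_pos.2 ht) (gaussPDF_pos t))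

end Gaussian

lemma strictConcaveOn_log_gaussCDF : StrictConcaveOn ℝ univ fun x => log (gaussCDF x) := by
  have hΦ : Continuous gaussCDF :=
    continuous_iff_continuousAt.2 fun x => (hasDerivAt_gaussCDF x).continuousAt
  refine strictConcaveOn_univ_of_deriv2_neg (hΦ.log fun x => (gaussCDF_pos x).ne') fun x => ?_
  have hderiv : deriv (fun x => log (gaussCDF x)) = gaussPDF / gaussCDF :=
    funext fun y => ((hasDerivAt_gaussCDF y).log (gaussCDF_pos y).ne').deriv
  have hderiv2 := (hasDerivAt_gaussPDF x).div (hasDerivAt_gaussCDF x) (gaussCDF_pos x).ne'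
  rw [Function.iterate_succ_apply, Function.iterate_one, hderiv, hderiv2.deriv]
  rw [show -x * gaussPDF x * gaussCDF x - gaussPDF x * gaussPDF x
      = -(gaussPDF x * (x * gaussCDF x + gaussPDF x)) by ring]
  exact div_neg_of_neg_of_pos
    (neg_neg_of_pos (mul_pos (gaussPDF_pos x) (mul_gaussCDF_add_gaussPDF_pos x)))
    (pow_pos (gaussCDF_pos x) 2)

lemma strictConcaveOn_log_one_sub_gaussCDF :
    StrictConcaveOn ℝ univ fun x => log (1 - gaussCDF x) := by
  refine ⟨convex_univ, fun x _ y _ hxy a b ha hb hab => ?_⟩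
  simp only [one_sub_gaussCDF, smul_eq_mul, neg_add, ← mul_neg]
  exact
    strictConcaveOn_log_gaussCDF.2 (mem_univ (-x)) (mem_univ (-y)) (neg_injective.ne hxy) ha hb hab

noncomputable def probitLogLik (b : Bool) (p : ℝ) : ℝ :=
  bval b * log (1 - gaussCDF p) + (1 - bval b) * log (gaussCDF p)

lemma strictConcaveOn_probitLogLik (b : Bool) : StrictConcaveOn ℝ univ (probitLogLik b) := by
  unfold probitLogLik
  cases b
  · simpa [bval] using strictConcaveOn_log_gaussCDF
  · simpa [bval] using strictConcaveOn_log_one_sub_gaussCDF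

theorem stmt10_general (n : ℕ)
    (μ : (Fin n → Bool) × (Fin n → Bool) → ℝ)
    (hpos : ∀ z, 0 < μ z) :
    StrictConcaveOn ℝ Set.univ
      (fun θ : Matrix (Fin n) (Fin n) ℝ × (Fin n → ℝ) =>
        ∑ z : (Fin n → Bool) × (Fin n → Bool), μ z *
          ∑ i, (bval (z.1 i) *
              Real.log (1 - gaussCDF (θ.2 i - (θ.1.mulVec (fun j => bval (z.2 j))) i))
            + (1 - bval (z.1 i)) *
              Real.log (gaussCDF (θ.2 i - (θ.1.mulVec (fun j => bval (z.2 j))) i)))) := by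
  have hsep : Function.Injective fun θ (k : ((Fin n → Bool) × (Fin n → Bool)) × Fin n) =>
      linearPredictor (fun j => bval (k.1.2 j)) k.2 θ := fun θ θ' h =>
    linearPredictor_injective (funext fun k => congrFun h ((fun _ => false, k.1), k.2))
  refine (strictConcaveOn_univ_sum_mul_comp_linearMap
    (fun k => strictConcaveOn_probitLogLik (k.1.1 k.2)) (fun k => hpos k.1) _ hsep).congr
    fun θ _ => ?_
  simp only [Fintype.sum_prod_type, Finset.mul_sum, probitLogLik, linearPredictor_apply]

/-- **Strict concavity of the expected log-likelihood** (part of Theorem 4).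
If `μ` is an everywhere-positive pmf on `{0,1}^n × {0,1}^n`, then
`L(A,c) = Σ_{(x,y)} μ(x,y) Σ_i [x_i log(1 − Φ(c_i − (Ay)_i)) + (1 − x_i) log Φ(c_i − (Ay)_i)]`
is strictly concave in `(A,c)` on `ℝ^{n×n} × ℝ^n`. -/
theorem stmt10 (n : ℕ) (hn : 2 ≤ n)
    (μ : (Fin n → Bool) × (Fin n → Bool) → ℝ)
    (hpos : ∀ z, 0 < μ z) (hsum : ∑ z, μ z = 1) :
    StrictConcaveOn ℝ Set.univ
      (fun θ : Matrix (Fin n) (Fin n) ℝ × (Fin n → ℝ) =>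
        ∑ z : (Fin n → Bool) × (Fin n → Bool), μ z *
          ∑ i, (bval (z.1 i) *
              Real.log (1 - gaussCDF (θ.2 i - (θ.1.mulVec (fun j => bval (z.2 j))) i))
            + (1 - bval (z.1 i)) *
              Real.log (gaussCDF (θ.2 i - (θ.1.mulVec (fun j => bval (z.2 j))) i)))) :=
  stmt10_general n μ hpos
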